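/- arXiv:2508.00183 — 6 statements merged into one kernel-verified Lean document; each statement's English description precedes it below -/
import Mathlib

section
/- Any ℓ-dimensional linear subspace of ℝ^k contains at most 2^ℓ vectors all of whose entries lie in {+1, -1}. -/
/-!
The coordinate functionals `v ↦ v i`, restricted to `V`, have no common zero on `V \ {0}`, so they
span the dual of `V` and `finrank V` of them form a basis of it. Hence a vector of `V` is determined
by `finrank V` of its coordinates, and a `±1`-vector leaves `2` choices for each of them.
-/

open Module Finset

variable {K ι : Type*} [Field K]

namespace Submodule

theorem span_range_proj_comp_subtype_eq_top (V : Submodule K (ι → K)) [FiniteDimensional K V] :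
    span K (Set.range fun i => LinearMap.proj i ∘ₗ V.subtype) = ⊤ := by
  refine eq_top_iff.2 fun φ _ => FiniteDimensional.mem_span_of_iInf_ker_le_ker fun v hv => ?_
  have hv0 : v = 0 := Subtype.ext <| funext fun i => by simpa using (mem_iInf _).1 hv i
  simp [hv0]

theorem exists_injective_restrict_fin_finrank (V : Submodule K (ι → K)) [FiniteDimensional K V] :
    ∃ a : Fin (finrank K V) → ι, Function.Injective fun (v : V) j => (v : ι → K) (a j) := by
  obtain ⟨κ, a, -, hspan, hli⟩ :=
    exists_linearIndependent' K fun i => LinearMap.proj i ∘ₗ V.subtype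
  let b : Basis κ K (Dual K V) :=
    Basis.mk hli (by rw [hspan, span_range_proj_comp_subtype_eq_top])
  have : Fintype κ := FiniteDimensional.fintypeBasisIndex b
  let e : Fin (finrank K V) ≃ κ := Fintype.equivFinOfCardEq
    (by rw [← finrank_eq_card_basis b, Subspace.dual_finrank_eq]) |>.symm
  refine ⟨a ∘ e, fun v w hvw => eval_apply_injective K (b.ext fun i => ?_)⟩
  simpa [b, e] using congrFun hvw (e.symm i)

theorem ncard_setOf_mem_forall_apply_mem_le (V : Submodule K (ι → K)) [FiniteDimensional K V]
    (C : Finset K) : {v | v ∈ V ∧ ∀ i, v i ∈ C}.ncard ≤ #C ^ finrank K V := by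
  obtain ⟨a, ha⟩ := V.exists_injective_restrict_fin_finrank
  rw [← Fintype.card_piFinset_const, ← Set.ncard_coe_finset]
  refine Set.ncard_le_ncard_of_injOn (fun v j => v (a j)) (fun v hv => ?_) (fun v hv w hw hvw => ?_)
    (Finset.finite_toSet _)
  · simpa using fun j => hv.2 (a j)
  · exact congrArg Subtype.val (@ha ⟨v, hv.1⟩ ⟨w, hw.1⟩ hvw)

end Submodule

/-- Any ℓ-dimensional linear subspace of ℝ^k contains at most 2^ℓ vectors all of whose
entries lie in {+1, -1}. -/
theorem pm_one_vectors_in_subspace (k ℓ : ℕ) (V : Submodule ℝ (Fin k → ℝ))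
    (hV : Module.finrank ℝ V = ℓ) :
    Set.ncard {v : Fin k → ℝ | v ∈ V ∧ ∀ i, v i = 1 ∨ v i = -1} ≤ 2 ^ ℓ := by
  have hC : #({1, -1} : Finset ℝ) = 2 := card_pair (by norm_num)
  simpa [hC, hV] using V.ncard_setOf_mem_forall_apply_mem_le {1, -1}
end

section
/- For all n ≥ t ≥ ℓ ≥ 1, the minimum size C(n,t,ℓ) of an (n,t,ℓ)-covering design satisfies C(n,t,ℓ) ≤ (1 + ln(C(t,ℓ))) · C(n,ℓ)/C(t,ℓ), where C(a,b) denotes the binomial coefficient. -/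
/-!
Greedy covering (Lovász, Stein). Give each `t`-set the potential `H k`, where `k` is the number
of still uncovered `ℓ`-sets inside it and `H` is the harmonic number. Every `ℓ`-set lies in
`r = C(n-ℓ, t-ℓ)` of the `t`-sets. When the greedy choice covers `g` new `ℓ`-sets, no `t`-set
contains more than `g` uncovered ones, so each newly covered `ℓ`-set lowers the potential of each
of its `r` supersets by at least `1/g`: the total potential drops by at least `r`. Hence greedy stops after at most `C(n,t) · H (C(t,ℓ)) / r` choices, and
`H m ≤ 1 + ln m` together with `C(n,t) C(t,ℓ) = C(n,ℓ) r` gives the bound.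
-/

open Finset

lemma harmonic_mono : Monotone harmonic :=
  monotone_nat_of_le_succ fun n => by
    rw [harmonic_succ]
    exact le_add_of_nonneg_right (by positivity)

lemma div_le_harmonic_sub_harmonic {a b g : ℕ} (hab : a ≤ b) (hbg : b ≤ g) :
    ((b - a : ℕ) : ℚ) / g ≤ harmonic b - harmonic a := by
  have hconst : ((b - a : ℕ) : ℚ) / g = ∑ _i ∈ Ico a b, (g : ℚ)⁻¹ := by
    rw [sum_const, Nat.card_Ico, nsmul_eq_mul, div_eq_mul_inv]
  rw [hconst, harmonic, harmonic, ← sum_Ico_eq_sub _ hab]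
  refine sum_le_sum fun i hi => inv_anti₀ (by positivity) ?_
  have := (mem_Ico.mp hi).2
  exact_mod_cast (by omega : i + 1 ≤ g)

section GreedyCover

variable {ι β : Type*} [DecidableEq β] {𝒞 : Finset ι} {cov : ι → Finset β} {r : ℕ}

lemma card_mul_le_sum_card_inter {W : Finset β} (h : ∀ e ∈ W, r ≤ #{i ∈ 𝒞 | e ∈ cov i}) :
    #W * r ≤ ∑ i ∈ 𝒞, #(W ∩ cov i) := by
  refine (W.card_nsmul_le_sum _ _ h).trans ?_
  simp_rw [← filter_mem_eq_inter, card_eq_sum_ones, sum_filter]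
  exact sum_comm.le

lemma add_sum_harmonic_sdiff_le {U : Finset β} (hcov : ∀ e ∈ U, r ≤ #{i ∈ 𝒞 | e ∈ cov i})
    {i₀ : ι} (hmax : ∀ i ∈ 𝒞, #(cov i ∩ U) ≤ #(cov i₀ ∩ U)) (hne : (cov i₀ ∩ U).Nonempty) :
    r + ∑ i ∈ 𝒞, harmonic #(cov i ∩ (U \ cov i₀)) ≤ ∑ i ∈ 𝒞, harmonic #(cov i ∩ U) := by
  set W := cov i₀ ∩ U
  have hW : (0 : ℚ) < #W := by exact_mod_cast hne.card_pos
  have hdrop : ∀ i ∈ 𝒞, (#(W ∩ cov i) : ℚ) / #W ≤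
      harmonic #(cov i ∩ U) - harmonic #(cov i ∩ (U \ cov i₀)) := by
    intro i hi
    have hsub : cov i ∩ (U \ cov i₀) ⊆ cov i ∩ U := inter_subset_inter_left sdiff_subset
    have hdiff : (cov i ∩ U) \ (cov i ∩ (U \ cov i₀)) = W ∩ cov i := by
      ext; simp only [W, mem_sdiff, mem_inter]; tauto
    have := div_le_harmonic_sub_harmonic (card_le_card hsub) (hmax i hi)
    rwa [← card_sdiff_of_subset hsub, hdiff] at this
  have hcount : (r : ℚ) ≤ ∑ i ∈ 𝒞, (#(W ∩ cov i) : ℚ) / #W := by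
    rw [← sum_div, le_div_iff₀ hW, mul_comm]
    exact_mod_cast card_mul_le_sum_card_inter fun e he => hcov e (mem_inter.mp he).2
  have htotal := sum_le_sum hdrop
  rw [sum_sub_distrib] at htotal
  linarith

theorem exists_subcover_card_mul_le_sum_harmonic (hr : 0 < r) (U : Finset β)
    (hcov : ∀ e ∈ U, r ≤ #{i ∈ 𝒞 | e ∈ cov i}) :
    ∃ S ⊆ 𝒞, (∀ e ∈ U, ∃ i ∈ S, e ∈ cov i) ∧
      (#S * r : ℚ) ≤ ∑ i ∈ 𝒞, harmonic #(cov i ∩ U) := by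
  classical
  induction U using Finset.strongInduction with
  | H U ih =>
  obtain rfl | ⟨e, he⟩ := U.eq_empty_or_nonempty
  · exact ⟨∅, empty_subset _, by simp, by simp⟩
  obtain ⟨i₁, hi₁⟩ := card_pos.mp (hr.trans_le (hcov e he))
  obtain ⟨hi₁𝒞, he₁⟩ := mem_filter.mp hi₁
  obtain ⟨i₀, hi₀, hmax⟩ := 𝒞.exists_max_image (fun i => #(cov i ∩ U)) ⟨i₁, hi₁𝒞⟩
  have hne : (cov i₀ ∩ U).Nonempty :=
    card_pos.mp ((card_pos.mpr ⟨e, mem_inter.mpr ⟨he₁, he⟩⟩).trans_le (hmax i₁ hi₁𝒞))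
  have hss : U \ cov i₀ ⊂ U := by
    obtain ⟨w, hw⟩ := hne
    exact (ssubset_iff_of_subset sdiff_subset).mpr
      ⟨w, (mem_inter.mp hw).2, fun h => (mem_sdiff.mp h).2 (mem_inter.mp hw).1⟩
  obtain ⟨S, hS𝒞, hScov, hScard⟩ := ih _ hss fun x hx => hcov x (mem_sdiff.mp hx).1
  refine ⟨insert i₀ S, insert_subset hi₀ hS𝒞, fun x hx => ?_, ?_⟩
  · by_cases hx₀ : x ∈ cov i₀
    · exact ⟨i₀, mem_insert_self _ _, hx₀⟩
    · obtain ⟨i, hi, hxi⟩ := hScov x (mem_sdiff.mpr ⟨hx, hx₀⟩)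
      exact ⟨i, mem_insert_of_mem hi, hxi⟩
  · calc (#(insert i₀ S) * r : ℚ) ≤ (#S + 1) * r := by
          gcongr; exact_mod_cast card_insert_le _ _
      _ = #S * r + r := by ring
      _ ≤ _ := by linarith [add_sum_harmonic_sdiff_le hcov hmax hne]

theorem exists_subcover_card_mul_le (hr : 0 < r) (U : Finset β)
    (hcov : ∀ e ∈ U, r ≤ #{i ∈ 𝒞 | e ∈ cov i}) {d : ℕ} (hd : ∀ i ∈ 𝒞, #(cov i) ≤ d) :
    ∃ S ⊆ 𝒞, (∀ e ∈ U, ∃ i ∈ S, e ∈ cov i) ∧ (#S * r : ℝ) ≤ #𝒞 * (1 + Real.log d) := by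
  obtain ⟨S, hS𝒞, hScov, hScard⟩ := exists_subcover_card_mul_le_sum_harmonic hr U hcov
  refine ⟨S, hS𝒞, hScov, ?_⟩
  have hterm : ∀ i ∈ 𝒞, (harmonic #(cov i ∩ U) : ℝ) ≤ 1 + Real.log d := fun i hi =>
    calc (harmonic #(cov i ∩ U) : ℝ) ≤ harmonic d := by
          exact_mod_cast harmonic_mono ((card_le_card inter_subset_left).trans (hd i hi))
      _ ≤ 1 + Real.log d := harmonic_le_one_add_log d
  calc (#S * r : ℝ) = ((#S * r : ℚ) : ℝ) := by push_cast; rfl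
    _ ≤ ∑ i ∈ 𝒞, (harmonic #(cov i ∩ U) : ℝ) := by exact_mod_cast hScard
    _ ≤ ∑ _i ∈ 𝒞, (1 + Real.log d) := sum_le_sum hterm
    _ = #𝒞 * (1 + Real.log d) := by rw [sum_const, nsmul_eq_mul]

end GreedyCover

lemma card_filter_mem_powersetCard {n t : ℕ} {e : Finset (Fin n)} (he : #e ≤ t) :
    #{T ∈ (univ : Finset (Fin n)).powersetCard t | e ∈ T.powersetCard #e} =
      (n - #e).choose (t - #e) := by
  have hfilter : {T ∈ (univ : Finset (Fin n)).powersetCard t | e ∈ T.powersetCard #e} =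
      {T ∈ (univ : Finset (Fin n)).powersetCard t | e ⊆ T} := filter_congr fun T _ => by simp [mem_powersetCard]
  rw [hfilter, card_filter_powersetCard_subset e univ t (subset_univ e) he, card_univ,
    Fintype.card_fin]

def IsCoveringDesign (n t ℓ : ℕ) (F : Finset (Finset (Fin n))) : Prop :=
  (∀ T ∈ F, T.card = t) ∧
  ∀ S : Finset (Fin n), S.card = ℓ → ∃ T ∈ F, S ⊆ T

theorem covering_design_bound_general (n t ℓ : ℕ) (hℓt : ℓ ≤ t) (htn : t ≤ n) :
    ∃ F : Finset (Finset (Fin n)), IsCoveringDesign n t ℓ F ∧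
      (F.card : ℝ) ≤ (1 + Real.log (Nat.choose t ℓ)) *
        (Nat.choose n ℓ : ℝ) / (Nat.choose t ℓ : ℝ) := by
  set r := (n - ℓ).choose (t - ℓ)
  have hr : (0 : ℝ) < r := by exact_mod_cast Nat.choose_pos (Nat.sub_le_sub_right htn ℓ)
  have hk : (0 : ℝ) < t.choose ℓ := by exact_mod_cast Nat.choose_pos hℓt
  have hcov : ∀ e ∈ (univ : Finset (Fin n)).powersetCard ℓ,
      r ≤ #{T ∈ univ.powersetCard t | e ∈ T.powersetCard ℓ} := fun e he => by
    obtain ⟨-, rfl⟩ := mem_powersetCard.mp he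
    exact (card_filter_mem_powersetCard hℓt).ge
  obtain ⟨F, hF, hFcov, hFcard⟩ := exists_subcover_card_mul_le (by exact_mod_cast hr) _ hcov
    (d := t.choose ℓ) fun T hT => by rw [card_powersetCard, (mem_powersetCard.mp hT).2]
  refine ⟨F, ⟨fun T hT => (mem_powersetCard.mp (hF hT)).2, fun S hS => ?_⟩, ?_⟩
  · obtain ⟨T, hT, hST⟩ := hFcov S (mem_powersetCard.mpr ⟨subset_univ S, hS⟩)
    exact ⟨T, hT, (mem_powersetCard.mp hST).1⟩
  · have hchoose : (n.choose t * t.choose ℓ : ℝ) = n.choose ℓ * r := by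
      exact_mod_cast Nat.choose_mul hℓt
    rw [card_powersetCard, card_univ, Fintype.card_fin] at hFcard
    rw [le_div_iff₀ hk, ← mul_le_mul_iff_of_pos_right hr]
    calc (#F * t.choose ℓ * r : ℝ) = #F * r * t.choose ℓ := by ring
      _ ≤ n.choose t * (1 + Real.log (t.choose ℓ)) * t.choose ℓ := by gcongr
      _ = (1 + Real.log (t.choose ℓ)) * n.choose ℓ * r := by
          linear_combination (1 + Real.log (t.choose ℓ)) * hchoose

/-- Erdős–Spencer bound: there is an `(n,t,ℓ)`-covering design of size at most
`(1 + ln (t choose ℓ)) * (n choose ℓ) / (t choose ℓ)`. -/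
theorem covering_design_bound (n t ℓ : ℕ) (hℓ : 1 ≤ ℓ) (hℓt : ℓ ≤ t) (htn : t ≤ n) :
    ∃ F : Finset (Finset (Fin n)), IsCoveringDesign n t ℓ F ∧
      (F.card : ℝ) ≤ (1 + Real.log (Nat.choose t ℓ)) *
        (Nat.choose n ℓ : ℝ) / (Nat.choose t ℓ : ℝ) :=
  covering_design_bound_general n t ℓ hℓt htn
end

section
/- A block construction of a {±1}-protocol with block parameters (k₀, n₀, ℓ₀) satisfying 2ℓ₀ ≤ n₀ must satisfy 2ℓ₀ + log₂(C(n₀,ℓ₀)) − log₂(C(2ℓ₀,ℓ₀)) ≥ k₀. -/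
/-!
Double counting over pairs `(w, T)` with `w` a sign vector and `T` a set of `2ℓ₀` columns whose
span contains `w`. Every sign vector lies in the span of some `ℓ₀` columns, hence in the span of
each of the `C(n₀ - ℓ₀, ℓ₀)` sets of `2ℓ₀` columns containing them. Conversely, a subspace of
dimension `d` is determined by `d` suitable coordinates, so it contains at most `2^d` sign vectors.
Thus `2^k₀ C(n₀ - ℓ₀, ℓ₀) ≤ C(n₀, 2ℓ₀) 2^(2ℓ₀)`, and the identity
`C(n₀, 2ℓ₀) C(2ℓ₀, ℓ₀) = C(n₀, ℓ₀) C(n₀ - ℓ₀, ℓ₀)` turns this into the claimed bound.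
-/

open Finset Module

section CoordinateRestriction

variable {K ι : Type*} [Field K] [Fintype ι] [DecidableEq ι]

theorem Submodule.card_le_finrank_of_forall_exists_restrict_eq_single
    (V : Submodule K (ι → K)) (B : Finset ι)
    (h : ∀ j : B, ∃ x ∈ V, B.restrict x = Pi.single j 1) : #B ≤ finrank K V := by
  let R : (ι → K) →ₗ[K] (B → K) := LinearMap.funLeft K K Subtype.val
  have hR : V.map R = ⊤ := by
    rw [eq_top_iff, ← (Pi.basisFun K B).span_eq, Submodule.span_le]
    rintro _ ⟨j, rfl⟩
    obtain ⟨x, hxV, hx⟩ := h j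
    exact ⟨x, hxV, by rw [Pi.basisFun_apply]; exact hx⟩
  calc #B = finrank K (V.map R) := by
        rw [hR, finrank_top, Module.finrank_fintype_fun_eq_card, Fintype.card_coe]
    _ ≤ finrank K V := Submodule.finrank_map_le R V

theorem Submodule.exists_erase_forall_eq_zero (V : Submodule K (ι → K))
    {B : Finset ι} (hB : ∀ x ∈ V, (∀ i ∈ B, x i = 0) → x = 0) (hVB : finrank K V < #B) :
    ∃ j ∈ B, ∀ x ∈ V, (∀ i ∈ B.erase j, x i = 0) → x = 0 := by
  by_contra! hne
  refine hVB.not_ge (V.card_le_finrank_of_forall_exists_restrict_eq_single B fun ⟨j, hj⟩ => ?_)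
  obtain ⟨x, hxV, hx0, hx⟩ := hne j hj
  have hxj : x j ≠ 0 := fun hxj => hx <| hB x hxV fun i hi => by
    obtain rfl | hij := eq_or_ne i j
    · exact hxj
    · exact hx0 i (mem_erase.2 ⟨hij, hi⟩)
  refine ⟨(x j)⁻¹ • x, V.smul_mem _ hxV, funext fun ⟨i, hi⟩ => ?_⟩
  obtain rfl | hij := eq_or_ne i j
  · simp [hxj]
  · simp [hij, hx0 i (mem_erase.2 ⟨hij, hi⟩)]

theorem Submodule.exists_card_eq_finrank_forall_eq_zero (V : Submodule K (ι → K)) :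
    ∃ B : Finset ι, #B = finrank K V ∧ ∀ x ∈ V, (∀ i ∈ B, x i = 0) → x = 0 := by
  classical
  obtain ⟨B, hB, hmin⟩ := exists_min_image
    {B : Finset ι | finrank K V ≤ #B ∧ ∀ x ∈ V, (∀ i ∈ B, x i = 0) → x = 0} card
    ⟨univ, mem_filter.2 ⟨mem_univ _, by simpa using V.finrank_le,
      fun x _ hx => funext fun i => hx i (mem_univ i)⟩⟩
  obtain ⟨hVB, hB⟩ := (mem_filter.1 hB).2
  refine ⟨B, hVB.antisymm' (not_lt.1 fun hlt => ?_), hB⟩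
  obtain ⟨j, hj, hBj⟩ := V.exists_erase_forall_eq_zero hB hlt
  have := hmin (B.erase j) (mem_filter.2 ⟨mem_univ _, by rw [card_erase_of_mem hj]; omega, hBj⟩)
  rw [card_erase_of_mem hj] at this
  omega

theorem Submodule.card_filter_mem_piFinset_le (V : Submodule K (ι → K)) [DecidablePred (· ∈ V)]
    (A : Finset K) : #{x ∈ Fintype.piFinset fun _ => A | x ∈ V} ≤ #A ^ finrank K V := by
  obtain ⟨B, hcard, hB⟩ := V.exists_card_eq_finrank_forall_eq_zero
  calc #{x ∈ Fintype.piFinset fun _ => A | x ∈ V}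
      ≤ #(Fintype.piFinset fun _ : B => A) := by
        refine card_le_card_of_injOn B.restrict (fun x hx => ?_) fun x hx y hy hxy => ?_
        · simp_all
        · simp only [coe_filter, Set.mem_ofPred_eq] at hx hy
          refine sub_eq_zero.1 <| hB _ (V.sub_mem hx.2 hy.2) fun i hi => ?_
          simpa [sub_eq_zero] using congrFun hxy ⟨i, hi⟩
    _ = #A ^ finrank K V := by simp [hcard]

end CoordinateRestriction

theorem Finset.card_mul_choose_le_choose_mul {α ι : Type*} [Fintype ι] (W : Finset α)
    (r : α → Finset ι → Prop) [∀ w T, Decidable (r w T)] (hr : ∀ w S T, S ⊆ T → r w S → r w T)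
    {ℓ m N : ℕ} (hℓm : ℓ ≤ m) (hm : m ≤ Fintype.card ι)
    (hW : ∀ w ∈ W, ∃ S : Finset ι, #S ≤ ℓ ∧ r w S)
    (hN : ∀ T : Finset ι, #T = m → #{w ∈ W | r w T} ≤ N) :
    #W * (Fintype.card ι - ℓ).choose (m - ℓ) ≤ (Fintype.card ι).choose m * N := by
  classical
  suffices hcover : ∀ w ∈ W,
      (Fintype.card ι - ℓ).choose (m - ℓ) ≤ #(bipartiteAbove r (powersetCard m univ) w) by
    simpa using card_mul_le_card_mul r hcover fun T hT => hN T (mem_powersetCard.1 hT).2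
  intro w hw
  obtain ⟨S, hS, hwS⟩ := hW w hw
  obtain ⟨S', hSS', -, hS'⟩ := exists_subsuperset_card_eq (subset_univ S) hS (by simp; omega)
  calc (Fintype.card ι - ℓ).choose (m - ℓ) = #{T ∈ powersetCard m univ | S' ⊆ T} := by
        rw [card_filter_powersetCard_subset S' univ m (subset_univ _) (hS' ▸ hℓm), card_univ, hS']
    _ ≤ #(bipartiteAbove r (powersetCard m univ) w) :=
        card_le_card <| monotone_filter_right _ fun T _ hT => hr w S T (hSS'.trans hT) hwS

theorem natCast_le_add_logb_sub_logb_of_two_pow_mul_le {k m a b : ℕ} (hb : 0 < b)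
    (h : 2 ^ k * b ≤ a * 2 ^ m) : (k : ℝ) ≤ m + Real.logb 2 a - Real.logb 2 b := by
  have ha : 0 < a := Nat.pos_of_ne_zero fun ha => by simp [ha] at h; omega
  have hR : ((2 ^ k * b : ℕ) : ℝ) ≤ (a * 2 ^ m : ℕ) := by exact_mod_cast h
  have hlog := Real.logb_le_logb_of_le one_lt_two (by positivity) hR
  push_cast at hlog
  rw [Real.logb_mul (by positivity) (by positivity), Real.logb_mul (by positivity) (by positivity),
    Real.logb_pow, Real.logb_pow, Real.logb_self_eq_one one_lt_two] at hlog
  linarith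

theorem Nat.mul_choose_le_choose_mul_of_mul_choose_sub_le {n k s a c : ℕ} (hsk : s ≤ k)
    (hkn : k ≤ n) (h : a * (n - s).choose (k - s) ≤ n.choose k * c) :
    a * k.choose s ≤ n.choose s * c := by
  refine Nat.le_of_mul_le_mul_right (c := (n - s).choose (k - s)) ?_ (Nat.choose_pos (by omega))
  calc a * k.choose s * (n - s).choose (k - s) ≤ n.choose k * c * k.choose s := by
        rw [mul_right_comm]; exact Nat.mul_le_mul_right _ h
    _ = n.choose s * c * (n - s).choose (k - s) := by
        rw [mul_right_comm, Nat.choose_mul hsk]; ring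

/-- Lower bound for block constructions: if `M ∈ ℝ^{k₀×n₀}` is such that every
`w ∈ {±1}^{k₀}` lies in the span of at most `ℓ₀` columns of `M` (the single-block
requirement of a block construction with parameters `(k₀,n₀,ℓ₀)`), and `2ℓ₀ ≤ n₀`, then
`2ℓ₀ + log₂ (n₀ choose ℓ₀) − log₂ (2ℓ₀ choose ℓ₀) ≥ k₀`. -/
theorem block_construction_lower_bound (k₀ n₀ ℓ₀ : ℕ) (hℓn : 2 * ℓ₀ ≤ n₀)
    (M : Matrix (Fin k₀) (Fin n₀) ℝ)
    (hM : ∀ w : Fin k₀ → ℝ, (∀ i, w i = 1 ∨ w i = -1) →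
      ∃ S : Finset (Fin n₀), S.card ≤ ℓ₀ ∧
        w ∈ Submodule.span ℝ ((fun j => fun i => M i j) '' ↑S)) :
    2 * (ℓ₀ : ℝ) + Real.logb 2 (Nat.choose n₀ ℓ₀) - Real.logb 2 (Nat.choose (2 * ℓ₀) ℓ₀)
      ≥ (k₀ : ℝ) := by
  classical
  let signs : Finset (Fin k₀ → ℝ) := Fintype.piFinset fun _ => {1, -1}
  let r (w : Fin k₀ → ℝ) (T : Finset (Fin n₀)) : Prop :=
    w ∈ Submodule.span ℝ ((fun j i => M i j) '' ↑T)
  have hsigns : #signs = 2 ^ k₀ := by simp [signs, card_pair (show (1 : ℝ) ≠ -1 by norm_num)]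
  have hspan (T : Finset (Fin n₀)) (hT : #T = 2 * ℓ₀) : #{w ∈ signs | r w T} ≤ 2 ^ (2 * ℓ₀) := by
    refine (Submodule.card_filter_mem_piFinset_le _ {1, -1}).trans ?_
    rw [card_pair (by norm_num), ← hT, ← coe_image]
    exact Nat.pow_le_pow_right two_pos ((finrank_span_finset_le_card _).trans card_image_le)
  have hcount := card_mul_choose_le_choose_mul signs r
    (fun w S T hST hw => Submodule.span_mono (Set.image_mono (coe_subset.2 hST)) hw)
    (by omega : ℓ₀ ≤ 2 * ℓ₀) (by simpa using hℓn) (fun w hw => hM w (by simpa [signs] using hw))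
    hspan
  rw [hsigns, Fintype.card_fin] at hcount
  have hkey := Nat.mul_choose_le_choose_mul_of_mul_choose_sub_le (by omega) hℓn hcount
  exact_mod_cast natCast_le_add_logb_sub_logb_of_two_pow_mul_le (Nat.choose_pos (by omega)) hkey
end

section
/- For integers n₀ ≥ 2ℓ₀ ≥ 2 and m ≥ 1, there exists a family F ⊆ A(n₀,2ℓ₀,m) with |F| ≤ (1 + m·ln(C(2ℓ₀,ℓ₀))) · (C(n₀,ℓ₀)/C(2ℓ₀,ℓ₀))^m such that every S ∈ A(n₀,ℓ₀,m) is contained in some T ∈ F. -/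
/-- The collection of subsets of the ground set `Fin m × Fin n₀` (partitioned into `m`
blocks `{i} × Fin n₀` of size `n₀`) having exactly `j` elements in each block. -/
def blockSubsets (n₀ j m : ℕ) : Set (Finset (Fin m × Fin n₀)) :=
  {S | ∀ i : Fin m, (S.filter (fun p => p.1 = i)).card = j}

/-!
The cover is built greedily (Lovász–Stein). Every member of `A(n₀,ℓ₀,m)` lies in
exactly `D = C(n₀-ℓ₀,ℓ₀)^m` members of `C = A(n₀,2ℓ₀,m)`, so by double counting some `T ∈ C`
covers at least a fraction `q = D/|C|` of any family of still uncovered sets. Taking such a `T`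
repeatedly, the number of sets used to cover `u` sets is at most `u` when `qu ≤ 1` and
`(1 + log (qu))/q` otherwise, since this bound `f` satisfies `1 + f(u - c) ≤ f(u)` whenever
`c ≥ max(1, qu)`. Here `qu = C(2ℓ₀,ℓ₀)^m` and `1/q = (C(n₀,ℓ₀)/C(2ℓ₀,ℓ₀))^m`.
-/

open Finset Real

-- `min_{k ≥ 0} (k + x e^{-qk})`: the cost of `k` greedy steps followed by one set for each of the
-- at most `x e^{-qk}` elements left over.
noncomputable def coverBound (q x : ℝ) : ℝ :=
  if q * x ≤ 1 then x else (1 + log (q * x)) / q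

section coverBound

variable {q x c : ℝ}

lemma coverBound_of_mul_le_one (h : q * x ≤ 1) : coverBound q x = x := if_pos h

lemma coverBound_of_one_lt_mul (h : 1 < q * x) : coverBound q x = (1 + log (q * x)) / q :=
  if_neg h.not_ge

lemma coverBound_of_one_le_mul (hq : 0 < q) (h : 1 ≤ q * x) :
    coverBound q x = (1 + log (q * x)) / q := by
  rcases h.eq_or_lt with h | h
  · rw [coverBound_of_mul_le_one h.ge, ← h, log_one, add_zero, eq_div_iff hq.ne', mul_comm, h]
  · exact coverBound_of_one_lt_mul h

lemma coverBound_mono (hq : 0 < q) : Monotone (coverBound q) := by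
  intro x y hxy
  have hqxy : q * x ≤ q * y := mul_le_mul_of_nonneg_left hxy hq.le
  rcases le_or_gt (q * y) 1 with hy | hy
  · rw [coverBound_of_mul_le_one (hqxy.trans hy), coverBound_of_mul_le_one hy]
    exact hxy
  rw [coverBound_of_one_lt_mul hy]
  rcases le_or_gt (q * x) 1 with hx | hx
  · rw [coverBound_of_mul_le_one hx, le_div_iff₀ hq]
    linarith [log_pos hy]
  · rw [coverBound_of_one_lt_mul hx]
    gcongr

lemma one_add_coverBound_mul_one_sub_le (hq : 0 < q) (h : 1 < q * x) :
    1 + coverBound q (x * (1 - q)) ≤ coverBound q x := by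
  rw [coverBound_of_one_lt_mul h, le_div_iff₀ hq]
  rcases le_or_gt (q * (x * (1 - q))) 1 with h' | h'
  · -- `(qx - 1)(1 - q) ≤ 1 - 1/(qx) ≤ log (qx)`, the first step being `qx (1 - q) ≤ 1`
    rw [coverBound_of_mul_le_one h']
    have hlog := one_sub_inv_le_log_of_pos (zero_lt_one.trans h)
    have hx : 0 < x := pos_of_mul_pos_right (zero_lt_one.trans h) hq.le
    have hinv : (q * x - 1) * (1 - q) ≤ 1 - (q * x)⁻¹ := by
      have hid : 1 - (q * x)⁻¹ - (q * x - 1) * (1 - q) =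
          (q * x - 1) * (1 - q * (x * (1 - q))) / (q * x) := by
        field_simp
      rw [← sub_nonneg, hid]
      apply div_nonneg (mul_nonneg _ _) <;> linarith
    nlinarith
  · have hq1 : 0 < 1 - q := by nlinarith
    rw [coverBound_of_one_lt_mul h', ← mul_assoc, log_mul (by positivity) hq1.ne']
    have := log_le_sub_one_of_pos hq1
    field_simp
    linarith

lemma one_add_coverBound_sub_le (hq : 0 < q) (hc₁ : 1 ≤ c) (hc : q * x ≤ c) :
    1 + coverBound q (x - c) ≤ coverBound q x := by
  rcases le_or_gt (q * x) 1 with h | h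
  · rw [coverBound_of_mul_le_one h, coverBound_of_mul_le_one (by nlinarith)]
    linarith
  calc 1 + coverBound q (x - c) ≤ 1 + coverBound q (x * (1 - q)) := by
        gcongr
        exact coverBound_mono hq (by linarith)
    _ ≤ coverBound q x := one_add_coverBound_mul_one_sub_le hq h

end coverBound

section Greedy

variable {α β : Type*} (r : α → β → Prop) [∀ a b, Decidable (r a b)]
  {C : Finset β} {D : ℕ}

lemma exists_card_mul_le_card_bipartiteBelow_mul {U : Finset α} (hU : U.Nonempty) (hD : 0 < D)
    (hdeg : ∀ a ∈ U, D ≤ #(C.bipartiteAbove r a)) :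
    ∃ b ∈ C, #U * D ≤ #(U.bipartiteBelow r b) * #C := by
  obtain ⟨a, ha⟩ := hU
  have hC : C.Nonempty :=
    (card_pos.1 (hD.trans_le (hdeg a ha))).mono (filter_subset _ _)
  apply exists_le_of_sum_le hC
  have hedges : #U * D ≤ ∑ a ∈ U, #(C.bipartiteAbove r a) := by
    simpa using card_nsmul_le_sum U _ D hdeg
  rw [sum_const, smul_eq_mul, ← sum_mul, ← sum_card_bipartiteAbove_eq_sum_card_bipartiteBelow,
    mul_comm]
  exact Nat.mul_le_mul_right _ hedges

theorem exists_cover_card_le_coverBound [DecidableEq β] (V : Finset α) (hD : 0 < D)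
    (hdeg : ∀ a ∈ V, D ≤ #(C.bipartiteAbove r a)) :
    ∃ F ⊆ C, (∀ a ∈ V, ∃ b ∈ F, r a b) ∧ (#F : ℝ) ≤ coverBound (D / #C) #V := by
  induction V using Finset.strongInduction with
  | H V ih =>
  obtain rfl | hV := V.eq_empty_or_nonempty
  · exact ⟨∅, empty_subset _, by simp, by simp [coverBound]⟩
  obtain ⟨b, hbC, hb⟩ := exists_card_mul_le_card_bipartiteBelow_mul r hV hD hdeg
  set c := #(V.bipartiteBelow r b)
  have hc : 0 < c := Nat.pos_of_mul_pos_right ((Nat.mul_pos (card_pos.2 hV) hD).trans_le hb)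
  obtain ⟨a₀, ha₀⟩ := card_pos.1 hc
  obtain ⟨ha₀V, ha₀b⟩ := (mem_bipartiteBelow r).1 ha₀
  obtain ⟨F, hFC, hFV, hF⟩ := ih {a ∈ V | ¬ r a b} (filter_ssubset.2 ⟨a₀, ha₀V, not_not.2 ha₀b⟩)
    (fun a ha => hdeg a (mem_filter.1 ha).1)
  refine ⟨insert b F, insert_subset hbC hFC, fun a ha => ?_, ?_⟩
  · by_cases hab : r a b
    · exact ⟨b, mem_insert_self _ _, hab⟩
    · obtain ⟨b', hb', hab'⟩ := hFV a (mem_filter.2 ⟨ha, hab⟩)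
      exact ⟨b', mem_insert_of_mem hb', hab'⟩
  have hsplit : (#{a ∈ V | ¬ r a b} : ℝ) = #V - c := by
    rw [eq_sub_iff_add_eq, add_comm]
    exact_mod_cast card_filter_add_card_filter_not (s := V) (r · b)
  have hCpos : (0 : ℝ) < #C := by exact_mod_cast card_pos.2 ⟨b, hbC⟩
  have hfrac : (D / #C : ℝ) * #V ≤ c := by
    rw [div_mul_eq_mul_div, div_le_iff₀ hCpos]
    exact_mod_cast (mul_comm D _).trans_le hb
  calc (#(insert b F) : ℝ) ≤ 1 + #F := by
        exact_mod_cast (card_insert_le b F).trans_eq (add_comm _ _)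
    _ ≤ 1 + coverBound (D / #C) (#V - c) := by rw [← hsplit]; gcongr
    _ ≤ coverBound (D / #C) #V :=
        one_add_coverBound_sub_le (by positivity) (by exact_mod_cast hc) hfrac

end Greedy

section Blocks

variable {ι α : Type*} [DecidableEq ι] [Fintype α] [DecidableEq α]

def blockSlice (S : Finset (ι × α)) (i : ι) : Finset α := {x | (i, x) ∈ S}

@[simp]
lemma mem_blockSlice {S : Finset (ι × α)} {i : ι} {x : α} : x ∈ blockSlice S i ↔ (i, x) ∈ S := by
  simp [blockSlice]

lemma card_filter_fst_eq_card_blockSlice (S : Finset (ι × α)) (i : ι) :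
    #{p ∈ S | p.1 = i} = #(blockSlice S i) :=
  card_nbij' Prod.snd (Prod.mk i) (fun p hp => by aesop) (fun x hx => by aesop)
    (fun p hp => by aesop) (fun x hx => by aesop)

lemma subset_iff_blockSlice_subset {S T : Finset (ι × α)} :
    S ⊆ T ↔ ∀ i, blockSlice S i ⊆ blockSlice T i := by
  simp [subset_iff]

def blockSliceEquiv [Fintype ι] : Finset (ι × α) ≃ (ι → Finset α) where
  toFun := blockSlice
  invFun f := {p | p.2 ∈ f p.1}
  left_inv S := by ext; simp
  right_inv f := by ext; simp

lemma card_filter_forall_blockSlice_mem [Fintype ι] (t : ι → Finset (Finset α)) :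
    #{S : Finset (ι × α) | ∀ i, blockSlice S i ∈ t i} = ∏ i, #(t i) := by
  rw [← Fintype.card_piFinset]
  exact card_equiv blockSliceEquiv (by simp [blockSliceEquiv])

end Blocks

instance (n₀ j m : ℕ) : DecidablePred (· ∈ blockSubsets n₀ j m) :=
  fun _ => inferInstanceAs (Decidable (∀ _, _))

lemma mem_blockSubsets_iff {n₀ j m : ℕ} {S : Finset (Fin m × Fin n₀)} :
    S ∈ blockSubsets n₀ j m ↔ ∀ i, #(blockSlice S i) = j := by
  simp [blockSubsets, card_filter_fst_eq_card_blockSlice]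

lemma card_toFinset_blockSubsets (n₀ j m : ℕ) :
    #(blockSubsets n₀ j m).toFinset = n₀.choose j ^ m := by
  have := card_filter_forall_blockSlice_mem
    (fun _ : Fin m => powersetCard j (univ : Finset (Fin n₀)))
  simpa [mem_blockSubsets_iff] using this

lemma card_bipartiteAbove_toFinset_blockSubsets {n₀ j k m : ℕ} {S : Finset (Fin m × Fin n₀)}
    (hS : S ∈ blockSubsets n₀ j m) (hjk : j ≤ k) :
    #((blockSubsets n₀ k m).toFinset.bipartiteAbove (· ⊆ ·) S) = (n₀ - j).choose (k - j) ^ m := by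
  rw [mem_blockSubsets_iff] at hS
  have := card_filter_forall_blockSlice_mem
    (fun i : Fin m => {t ∈ powersetCard k (univ : Finset (Fin n₀)) | blockSlice S i ⊆ t})
  simp [card_filter_powersetCard_subset, hS, hjk] at this
  simpa [bipartiteAbove, ← Set.filter_mem_univ_eq_toFinset, filter_filter, mem_blockSubsets_iff,
    subset_iff_blockSlice_subset, forall_and] using this

lemma choose_sub_div_choose_two_mul {n ℓ : ℕ} (hn : 2 * ℓ ≤ n) :
    ((n - ℓ).choose ℓ : ℝ) / n.choose (2 * ℓ) = (2 * ℓ).choose ℓ / n.choose ℓ := by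
  have h := Nat.choose_mul (n := n) (k := 2 * ℓ) (s := ℓ) (by omega)
  rw [show 2 * ℓ - ℓ = ℓ by omega] at h
  rw [div_eq_div_iff (by exact_mod_cast (Nat.choose_pos hn).ne')
    (by exact_mod_cast (Nat.choose_pos (by omega)).ne')]
  norm_cast
  linarith

theorem block_covering_design_general (n₀ ℓ₀ m : ℕ) (hn : 2 * ℓ₀ ≤ n₀) :
    ∃ F : Finset (Finset (Fin m × Fin n₀)),
      (∀ T ∈ F, T ∈ blockSubsets n₀ (2 * ℓ₀) m) ∧
      (F.card : ℝ) ≤ (1 + (m : ℝ) * Real.log (Nat.choose (2 * ℓ₀) ℓ₀)) *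
        ((Nat.choose n₀ ℓ₀ : ℝ) / (Nat.choose (2 * ℓ₀) ℓ₀ : ℝ)) ^ m ∧
      ∀ S ∈ blockSubsets n₀ ℓ₀ m, ∃ T ∈ F, S ⊆ T := by
  have hdeg (S) (hS : S ∈ (blockSubsets n₀ ℓ₀ m).toFinset) : (n₀ - ℓ₀).choose ℓ₀ ^ m ≤
      #((blockSubsets n₀ (2 * ℓ₀) m).toFinset.bipartiteAbove (· ⊆ ·) S) := by
    rw [card_bipartiteAbove_toFinset_blockSubsets (Set.mem_toFinset.1 hS) (by omega),
      show 2 * ℓ₀ - ℓ₀ = ℓ₀ by omega]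
  obtain ⟨F, hFC, hcov, hcard⟩ := exists_cover_card_le_coverBound _ _
    (D := (n₀ - ℓ₀).choose ℓ₀ ^ m) (pow_pos (Nat.choose_pos (by omega)) m) hdeg
  refine ⟨F, fun T hT => Set.mem_toFinset.1 (hFC hT), ?_,
    fun S hS => hcov S (Set.mem_toFinset.2 hS)⟩
  have hd : (1 : ℝ) ≤ (2 * ℓ₀).choose ℓ₀ := by exact_mod_cast Nat.choose_pos (by omega)
  have hN : (0 : ℝ) < n₀.choose ℓ₀ := by exact_mod_cast Nat.choose_pos (by omega)
  set d : ℝ := ((2 * ℓ₀).choose ℓ₀ : ℝ)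
  set N : ℝ := (n₀.choose ℓ₀ : ℝ)
  have hq : (((n₀ - ℓ₀).choose ℓ₀ ^ m : ℕ) : ℝ) / #(blockSubsets n₀ (2 * ℓ₀) m).toFinset =
      (d / N) ^ m := by
    rw [card_toFinset_blockSubsets]
    push_cast
    rw [← div_pow, choose_sub_div_choose_two_mul hn]
  have hqV : (d / N) ^ m * #(blockSubsets n₀ ℓ₀ m).toFinset = d ^ m := by
    rw [card_toFinset_blockSubsets]
    push_cast
    rw [← mul_pow, div_mul_cancel₀ _ hN.ne']
  rw [hq, coverBound_of_one_le_mul (by positivity) (hqV ▸ one_le_pow₀ hd), hqV, log_pow] at hcard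
  refine hcard.trans_eq ?_
  rw [div_pow, div_pow]
  field_simp

/-- Block-structured covering design: there is a family `F ⊆ A(n₀,2ℓ₀,m)` of size at most
`(1 + m ln (2ℓ₀ choose ℓ₀)) · ((n₀ choose ℓ₀)/(2ℓ₀ choose ℓ₀))^m` covering every member
of `A(n₀,ℓ₀,m)`. -/
theorem block_covering_design (n₀ ℓ₀ m : ℕ) (hℓ : 1 ≤ ℓ₀) (hn : 2 * ℓ₀ ≤ n₀)
    (hm : 1 ≤ m) :
    ∃ F : Finset (Finset (Fin m × Fin n₀)),
      (∀ T ∈ F, T ∈ blockSubsets n₀ (2 * ℓ₀) m) ∧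
      (F.card : ℝ) ≤ (1 + (m : ℝ) * Real.log (Nat.choose (2 * ℓ₀) ℓ₀)) *
        ((Nat.choose n₀ ℓ₀ : ℝ) / (Nat.choose (2 * ℓ₀) ℓ₀ : ℝ)) ^ m ∧
      ∀ S ∈ blockSubsets n₀ ℓ₀ m, ∃ T ∈ F, S ⊆ T :=
  block_covering_design_general n₀ ℓ₀ m hn
end

section
/- Suppose ν > 0, 0 < λ ≤ 1/2, ν ≥ 1, and λ/ν ∈ (0,1). If there is an infinite family of {±1}-protocols with parameters (kᵢ,nᵢ,ℓᵢ), kᵢ → ∞, nᵢ/kᵢ → ν and ℓᵢ/kᵢ → λ, then H(λ/ν) ≥ 1/ν, where H is the binary entropy function. -/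
/-- The binary entropy function (base-2 logarithm, with `H 0 = H 1 = 0`). -/
noncomputable def binH (p : ℝ) : ℝ :=
  -p * Real.logb 2 p - (1 - p) * Real.logb 2 (1 - p)

/-- A `{±1}`-protocol with parameters `(k, n, ℓ)` exists. -/
def ProtocolExists (k n ℓ : ℕ) : Prop :=
  ∃ (D : Matrix (Fin k) (Fin n) ℝ) (A : Matrix (Fin n) (Fin (2 ^ k)) ℝ),
    (∀ w : Fin k → ℝ, (∀ i, w i = 1 ∨ w i = -1) → ∃ j, ∀ i, (D * A) i j = w i) ∧
    (∀ j, Set.ncard {i | A i j ≠ 0} ≤ ℓ)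

/-!
Every sign vector is `D *ᵥ a` for an `ℓ`-sparse column `a` of `A`, so it lies in the span of the
columns of `D` indexed by any `t`-set `T` containing the support of `a`. That span has dimension
at most `t`, hence contains at most `2 ^ t` sign vectors (Odlyzko's lemma). Double counting the
pairs `(w, T)` gives `2 ^ k * C(t, ℓ) ≤ C(n, ℓ) * 2 ^ t`; for `t = 2ℓ`, since
`4 ^ ℓ ≤ (2ℓ + 1) * C(2ℓ, ℓ)`, this becomes
`2 ^ k ≤ (2ℓ + 1) * C(n, ℓ) ≤ (2ℓ + 1) * 2 ^ (n H(ℓ/n))`.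
Taking `log₂`, dividing by `k` and passing to the limit gives `1 ≤ ν H(λ/ν)`.
-/

open Finset Filter Topology Module Submodule Matrix

section SubspaceCoordinates

variable {K ι : Type*} [Field K] [Fintype ι]

/-- The coordinate functionals restricted to `V` span its dual, so a basis of the dual can be
chosen among them. -/
theorem Submodule.exists_finset_card_le_finrank_forall_eq_zero (V : Submodule K (ι → K)) :
    ∃ S : Finset ι, #S ≤ finrank K V ∧ ∀ x ∈ V, (∀ i ∈ S, x i = 0) → x = 0 := by
  classical
  let φ : ι → Dual K V := fun i => (LinearMap.proj i).comp V.subtype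
  obtain ⟨b, -, -, hspan, hli⟩ :=
    exists_linearIndepOn_extension (v := φ) (linearIndepOn_empty K φ) (Set.empty_subset Set.univ)
  refine ⟨b.toFinset, ?_, fun x hx hxb => funext fun i => ?_⟩
  · rw [Set.toFinset_card, ← Subspace.dual_finrank_eq]
    exact hli.fintype_card_le_finrank
  · have hker : span K (φ '' b) ≤ LinearMap.ker (Dual.eval K V ⟨x, hx⟩) :=
      span_le.2 fun _ ⟨j, hj, hφj⟩ => hφj ▸ hxb j (Set.mem_toFinset.2 hj)
    exact hker (hspan ⟨i, Set.mem_univ i, rfl⟩)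

/-- Odlyzko's lemma. -/
theorem Submodule.card_le_card_pow_finrank [DecidableEq ι] (V : Submodule K (ι → K)) {Λ : Finset K}
    (hΛ : Λ.Nonempty) {F : Finset (ι → K)} (hFV : ↑F ⊆ (V : Set (ι → K)))
    (hFΛ : F ⊆ Fintype.piFinset fun _ => Λ) : #F ≤ #Λ ^ finrank K V := by
  classical
  obtain ⟨S, hS, hSV⟩ := V.exists_finset_card_le_finrank_forall_eq_zero
  calc #F ≤ #(Fintype.piFinset fun _ : S => Λ) := by
        refine card_le_card_of_injOn (fun x i => x i) (fun x hx => ?_) fun x hx y hy hxy => ?_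
        · simpa using fun i _ => Fintype.mem_piFinset.1 (hFΛ hx) i
        · refine sub_eq_zero.1 (hSV (x - y) (V.sub_mem (hFV hx) (hFV hy)) fun i hi => ?_)
          exact sub_eq_zero.2 (congrFun hxy ⟨i, hi⟩)
    _ = #Λ ^ #S := by simp
    _ ≤ #Λ ^ finrank K V := Nat.pow_le_pow_right hΛ.card_pos hS

end SubspaceCoordinates

theorem card_mul_choose_le_of_card_filter_subset_le {α ι : Type*} [Fintype ι] [DecidableEq ι]
    (W : Finset α) (S : α → Finset ι) {ℓ t M : ℕ} (hS : ∀ w ∈ W, #(S w) = ℓ) (hℓt : ℓ ≤ t)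
    (ht : t ≤ Fintype.card ι) (hM : ∀ T : Finset ι, #T = t → #{w ∈ W | S w ⊆ T} ≤ M) :
    #W * t.choose ℓ ≤ (Fintype.card ι).choose ℓ * M := by
  set n := Fintype.card ι
  have hcount : #W * (n - ℓ).choose (t - ℓ) ≤ n.choose t * M :=
    calc #W * (n - ℓ).choose (t - ℓ)
        = ∑ w ∈ W, #{T ∈ powersetCard t univ | S w ⊆ T} := by
          refine (sum_const_nat fun w hw => ?_).symm
          rw [card_filter_powersetCard_subset _ _ _ (subset_univ _) ((hS w hw).trans_le hℓt),
            hS w hw, card_univ]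
      _ = ∑ T ∈ powersetCard t univ, #{w ∈ W | S w ⊆ T} :=
          sum_card_bipartiteAbove_eq_sum_card_bipartiteBelow _
      _ ≤ ∑ _T ∈ powersetCard t univ, M :=
          sum_le_sum fun T hT => hM T (mem_powersetCard.1 hT).2
      _ = n.choose t * M := by simp [n]
  refine Nat.le_of_mul_le_mul_right ?_ (Nat.choose_pos (Nat.sub_le_sub_right ht ℓ))
  calc #W * t.choose ℓ * (n - ℓ).choose (t - ℓ) = #W * (n - ℓ).choose (t - ℓ) * t.choose ℓ := by
        ring
    _ ≤ n.choose t * M * t.choose ℓ := Nat.mul_le_mul_right _ hcount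
    _ = n.choose ℓ * M * (n - ℓ).choose (t - ℓ) := by
        rw [mul_right_comm, Nat.choose_mul hℓt, mul_right_comm]

noncomputable def signVectors (k : ℕ) : Finset (Fin k → ℝ) :=
  Fintype.piFinset fun _ => {1, -1}

theorem mem_signVectors {k : ℕ} {w : Fin k → ℝ} :
    w ∈ signVectors k ↔ ∀ i, w i = 1 ∨ w i = -1 := by
  simp [signVectors]

theorem card_signVectors (k : ℕ) : #(signVectors k) = 2 ^ k := by
  simp [signVectors, card_pair (show (1 : ℝ) ≠ -1 by norm_num)]

theorem Matrix.mulVec_mem_span_image_transpose {R m n : Type*} [CommSemiring R] [Fintype n]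
    (D : Matrix m n R) {a : n → R} {T : Finset n} (ha : ∀ x ∉ T, a x = 0) :
    D *ᵥ a ∈ span R (Dᵀ '' ↑T) := by
  refine (mem_span_image_finset_iff_exists_fun' R).2 ⟨a, funext fun i => ?_⟩
  rw [Matrix.mulVec, dotProduct, ← sum_subset (subset_univ T) fun x _ hx => by simp [ha x hx]]
  simp [mul_comm]

theorem ProtocolExists.two_pow_mul_choose_le {k n ℓ t : ℕ} (hp : ProtocolExists k n ℓ)
    (hℓt : ℓ ≤ t) (htn : t ≤ n) : 2 ^ k * t.choose ℓ ≤ n.choose ℓ * 2 ^ t := by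
  classical
  obtain ⟨D, A, hW, hsupp⟩ := hp
  have hsparse : ∀ w ∈ signVectors k, ∃ S : Finset (Fin n), #S = ℓ ∧ w ∈ span ℝ (Dᵀ '' ↑S) := by
    intro w hw
    obtain ⟨j, hj⟩ := hW w (mem_signVectors.1 hw)
    obtain ⟨S, hsub, -, hS⟩ := exists_subsuperset_card_eq (subset_univ {x | A x j ≠ 0})
      (by simpa [Set.ncard_eq_toFinset_card'] using hsupp j) (by simpa using hℓt.trans htn)
    refine ⟨S, hS, ?_⟩
    have hwA : w = D *ᵥ fun x => A x j := funext fun i => (hj i).symm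
    exact hwA ▸ D.mulVec_mem_span_image_transpose fun x hx =>
      by_contra fun h => hx (hsub (by simpa using h))
  choose! S hS hSspan using hsparse
  have hM : ∀ T : Finset (Fin n), #T = t → #{w ∈ signVectors k | S w ⊆ T} ≤ 2 ^ t := by
    intro T hT
    calc #{w ∈ signVectors k | S w ⊆ T} ≤ #({1, -1} : Finset ℝ) ^ finrank ℝ (span ℝ (Dᵀ '' ↑T)) :=
          (span ℝ (Dᵀ '' ↑T)).card_le_card_pow_finrank (insert_nonempty _ _)
            (fun w hw => span_mono (Set.image_mono (coe_subset.2 (mem_filter.1 hw).2))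
              (hSspan w (mem_filter.1 hw).1))
            (filter_subset _ _)
      _ ≤ 2 ^ t := by
          rw [card_pair (by norm_num)]
          have hrank := finrank_span_finset_le_card (R := ℝ) (T.image fun x => Dᵀ x)
          rw [Set.finrank, coe_image] at hrank
          exact Nat.pow_le_pow_right two_pos (hrank.trans (hT ▸ card_image_le))
  simpa [card_signVectors] using
    card_mul_choose_le_of_card_filter_subset_le _ S hS hℓt (by simpa using htn) hM

theorem ProtocolExists.two_pow_le {k n ℓ : ℕ} (hp : ProtocolExists k n ℓ) (h : 2 * ℓ ≤ n) :
    2 ^ k ≤ (2 * ℓ + 1) * n.choose ℓ := by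
  have hcount := hp.two_pow_mul_choose_le (by omega) h
  refine Nat.le_of_mul_le_mul_right ?_ (Nat.choose_pos (by omega : ℓ ≤ 2 * ℓ))
  calc 2 ^ k * (2 * ℓ).choose ℓ ≤ n.choose ℓ * 4 ^ ℓ := by rwa [pow_mul] at hcount
    _ ≤ n.choose ℓ * ((2 * ℓ + 1) * (2 * ℓ).choose ℓ) :=
        Nat.mul_le_mul_left _ (Nat.four_pow_le_two_mul_add_one_mul_central_binom ℓ)
    _ = (2 * ℓ + 1) * n.choose ℓ * (2 * ℓ).choose ℓ := by ring

theorem binH_eq_binEntropy_div_log_two (p : ℝ) : binH p = Real.binEntropy p / Real.log 2 := by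
  simp only [binH, Real.binEntropy, Real.logb, Real.log_inv]
  ring

theorem continuous_binH : Continuous binH := by
  simpa only [funext binH_eq_binEntropy_div_log_two] using
    Real.binEntropy_continuous.div_const (Real.log 2)

theorem binH_two_inv : binH 2⁻¹ = 1 := by
  rw [binH_eq_binEntropy_div_log_two, Real.binEntropy_two_inv,
    div_self (Real.log_pos one_lt_two).ne']

theorem choose_mul_pow_mul_pow_le_one (n ℓ : ℕ) {p : ℝ} (hp0 : 0 ≤ p) (hp1 : p ≤ 1) :
    n.choose ℓ * (p ^ ℓ * (1 - p) ^ (n - ℓ)) ≤ 1 := by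
  rcases le_or_gt ℓ n with h | h
  · have hsum := add_pow p (1 - p) n
    rw [add_sub_cancel, one_pow] at hsum
    calc n.choose ℓ * (p ^ ℓ * (1 - p) ^ (n - ℓ)) = p ^ ℓ * (1 - p) ^ (n - ℓ) * n.choose ℓ := by
          ring
      _ ≤ ∑ i ∈ range (n + 1), p ^ i * (1 - p) ^ (n - i) * n.choose i :=
          single_le_sum (f := fun i => p ^ i * (1 - p) ^ (n - i) * n.choose i)
            (fun i _ => by have := sub_nonneg.2 hp1; positivity) (mem_range.2 (by omega))
      _ = 1 := hsum.symm
  · simp [Nat.choose_eq_zero_of_lt h]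

/-- With `p = ℓ / n`, `p ^ ℓ * (1 - p) ^ (n - ℓ) = 2 ^ (-n * binH p)`. -/
theorem logb_choose_le_mul_binH {n ℓ : ℕ} (h : ℓ ≤ n) :
    Real.logb 2 (n.choose ℓ) ≤ n * binH (ℓ / n) := by
  rcases Nat.eq_zero_or_pos ℓ with rfl | hℓ
  · simp [binH]
  rcases h.lt_or_eq with h | rfl
  swap
  · simp [binH, div_self (by positivity : (ℓ : ℝ) ≠ 0)]
  have hn : (0 : ℝ) < n := by exact_mod_cast hℓ.trans h
  set p : ℝ := ℓ / n with hp
  have hp0 : 0 < p := by positivity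
  have hq0 : 0 < 1 - p := by rw [sub_pos, div_lt_one hn]; exact_mod_cast h
  have hlog := Real.logb_nonpos one_lt_two (by positivity)
    (choose_mul_pow_mul_pow_le_one n ℓ hp0.le (sub_pos.1 hq0).le)
  rw [Real.logb_mul (Nat.cast_pos.2 (Nat.choose_pos h.le)).ne' (by positivity),
    Real.logb_mul (by positivity) (pow_pos hq0 _).ne',
    Real.logb_pow, Real.logb_pow, Nat.cast_sub h.le] at hlog
  have hnp : (n : ℝ) * p = ℓ := by rw [hp]; field_simp
  calc Real.logb 2 (n.choose ℓ) ≤ -(ℓ * Real.logb 2 p) - (n - ℓ) * Real.logb 2 (1 - p) := by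
        linarith
    _ = n * binH p := by rw [binH, ← hnp]; ring

theorem ProtocolExists.le_logb_add_mul_binH {k n ℓ : ℕ} (hp : ProtocolExists k n ℓ)
    (h : 2 * ℓ ≤ n) : (k : ℝ) ≤ Real.logb 2 (2 * ℓ + 1) + n * binH (ℓ / n) := by
  have hpow : (2 : ℝ) ^ k ≤ (2 * ℓ + 1) * n.choose ℓ := by exact_mod_cast hp.two_pow_le h
  have hlog := Real.logb_le_logb_of_le one_lt_two (by positivity) hpow
  rw [Real.logb_pow, Real.logb_self_eq_one one_lt_two, mul_one,
    Real.logb_mul (by positivity) (Nat.cast_pos.2 (Nat.choose_pos (by omega))).ne'] at hlog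
  linarith [logb_choose_le_mul_binH (show ℓ ≤ n by omega)]

section Asymptotics

variable {α : Type*} {l : Filter α} {f g : α → ℝ} {c : ℝ}

theorem tendsto_atTop_of_tendsto_div (hg : Tendsto g l atTop)
    (hfg : Tendsto (fun x => f x / g x) l (𝓝 c)) (hc : 0 < c) : Tendsto f l atTop :=
  (hfg.pos_mul_atTop hc hg).congr'
    ((hg.eventually_ne_atTop 0).mono fun _ hx => div_mul_cancel₀ _ hx)

theorem tendsto_logb_div_of_tendsto_div (b : ℝ) (hf : Tendsto f l atTop)
    (hfg : Tendsto (fun x => f x / g x) l (𝓝 c)) :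
    Tendsto (fun x => Real.logb b (f x) / g x) l (𝓝 0) := by
  have h := ((Real.isLittleO_log_id_atTop.tendsto_div_nhds_zero.comp hf).mul hfg).div_const
    (Real.log b)
  rw [zero_mul, zero_div] at h
  refine h.congr' ((hf.eventually_ne_atTop 0).mono fun x hx => ?_)
  simp only [Function.comp_apply, id, Real.logb]
  field_simp

end Asymptotics

theorem asymptotic_lower_bound_general (ν lam : ℝ) (hν : 1 ≤ ν) (hlam0 : 0 < lam)
    (hlam : lam ≤ 1 / 2)
    (k n ℓ : ℕ → ℕ)
    (hproto : ∀ i, ProtocolExists (k i) (n i) (ℓ i))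
    (hk : Filter.Tendsto (fun i => (k i : ℝ)) Filter.atTop Filter.atTop)
    (hn : Filter.Tendsto (fun i => (n i : ℝ) / (k i : ℝ)) Filter.atTop (nhds ν))
    (hℓ : Filter.Tendsto (fun i => (ℓ i : ℝ) / (k i : ℝ)) Filter.atTop (nhds lam)) :
    binH (lam / ν) ≥ 1 / ν := by
  have hν0 : 0 < ν := by linarith
  rw [ge_iff_le, div_le_iff₀ hν0]
  obtain hlt | heq := ((div_le_self hlam0.le hν).trans hlam).lt_or_eq
  swap
  · rw [heq, one_div, binH_two_inv]
    linarith
  have hpn : Tendsto (fun i => (ℓ i : ℝ) / n i) atTop (𝓝 (lam / ν)) :=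
    (hℓ.div hn hν0.ne').congr'
      ((hk.eventually_ne_atTop 0).mono fun i hi => div_div_div_cancel_right₀ hi _ _)
  have hbound : ∀ᶠ i in atTop,
      1 ≤ (Real.logb 2 (2 * ℓ i + 1) + n i * binH (ℓ i / n i)) / k i := by
    filter_upwards [hk.eventually_gt_atTop 0, hpn.eventually (gt_mem_nhds hlt),
      (tendsto_atTop_of_tendsto_div hk hn hν0).eventually_gt_atTop 0] with i hki hi hni
    rw [one_le_div hki]
    refine (hproto i).le_logb_add_mul_binH ?_
    rw [div_lt_iff₀ hni] at hi
    exact_mod_cast (by linarith : (2 * ℓ i : ℝ) ≤ n i)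
  have hlog : Tendsto (fun i => Real.logb 2 (2 * ℓ i + 1) / k i) atTop (𝓝 0) :=
    tendsto_logb_div_of_tendsto_div 2
      (tendsto_atTop_add_const_right _ 1
        ((tendsto_atTop_of_tendsto_div hk hℓ hlam0).const_mul_atTop two_pos))
      (((hℓ.const_mul 2).add hk.inv_tendsto_atTop).congr fun i => by simp only [Pi.inv_apply]; ring)
  have hlim := hlog.add (hn.mul ((continuous_binH.tendsto _).comp hpn))
  simp only [zero_add, Function.comp_def, div_mul_eq_mul_div, ← add_div] at hlim
  linarith [ge_of_tendsto hlim hbound]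

/-- Asymptotic form of the improved lower bound: any `{±1}`-feasible pair `(ν,λ)` with
`λ ≤ 1/2` must satisfy `H(λ/ν) ≥ 1/ν`. -/
theorem asymptotic_lower_bound (ν lam : ℝ) (hν : 1 ≤ ν) (hlam0 : 0 < lam)
    (hlam : lam ≤ 1 / 2) (hratio : lam / ν ∈ Set.Ioo (0 : ℝ) 1)
    (k n ℓ : ℕ → ℕ)
    (hproto : ∀ i, ProtocolExists (k i) (n i) (ℓ i))
    (hk : Filter.Tendsto (fun i => (k i : ℝ)) Filter.atTop Filter.atTop)
    (hn : Filter.Tendsto (fun i => (n i : ℝ) / (k i : ℝ)) Filter.atTop (nhds ν))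
    (hℓ : Filter.Tendsto (fun i => (ℓ i : ℝ) / (k i : ℝ)) Filter.atTop (nhds lam)) :
    binH (lam / ν) ≥ 1 / ν :=
  asymptotic_lower_bound_general ν lam hν hlam0 hlam k n ℓ hproto hk hn hℓ
end

section
/- Let C ⊆ {±1}^{k₀} be a covering code of radius r (every vector of {±1}^{k₀} is within Hamming distance r of some codeword), and let Ĉ ⊆ C contain exactly one of ±c for each c ∈ C, with ĉ = |Ĉ|. Then for every m ≥ 1 there is a {±1}-protocol with parameters (m·k₀, m·(k₀ + ĉ), m·(r+1)): every w ∈ {±1}^{m k₀} lies in the span of at most m(r+1) columns of D = I_m ⊗ M, where M = [I_{k₀} | B] and B has the elements of Ĉ as columns. -/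
/-- The block-diagonal encoding matrix `D = I_m ⊗ M` where `M = [I_{k₀} | B]` and the
columns of `B` are the elements of `Ĉ`. Rows are indexed by `Fin m × Fin k₀`, columns by
`Fin m × (Fin k₀ ⊕ Ĉ)`. -/
def coveringD (m k₀ : ℕ) (Chat : Finset (Fin k₀ → ℝ)) :
    Matrix (Fin m × Fin k₀) (Fin m × (Fin k₀ ⊕ {c // c ∈ Chat})) ℝ :=
  fun p q =>
    match q.2 with
    | Sum.inl i' => if p.1 = q.1 ∧ p.2 = i' then 1 else 0
    | Sum.inr c => if p.1 = q.1 then (c : Fin k₀ → ℝ) p.2 else 0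

set_option maxHeartbeats 1000000 in
/-- Covering-code block construction: if `C ⊆ {±1}^{k₀}` is a covering code of radius `r`
and `Ĉ ⊆ C` contains exactly one of `±c` for each `c ∈ C`, then for every `m` the matrix
`D = I_m ⊗ [I_{k₀} | B]` (with the elements of `Ĉ` as columns of `B`) gives a
`{±1}`-protocol with parameters `(m k₀, m(k₀+ĉ), m(r+1))`: every `w ∈ {±1}^{m k₀}` lies
in the span of at most `m(r+1)` of its columns. -/
theorem covering_code_protocol (k₀ r m : ℕ)
    (C Chat : Finset (Fin k₀ → ℝ))
    (hCpm : ∀ c ∈ C, ∀ i, c i = 1 ∨ c i = -1)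
    (hcover : ∀ w : Fin k₀ → ℝ, (∀ i, w i = 1 ∨ w i = -1) →
      ∃ c ∈ C, Set.ncard {i | w i ≠ c i} ≤ r)
    (hsub : Chat ⊆ C)
    (hexact : ∀ c ∈ C, Xor' (c ∈ Chat) (-c ∈ Chat)) :
    ∀ w : Fin m × Fin k₀ → ℝ, (∀ p, w p = 1 ∨ w p = -1) →
      ∃ S : Finset (Fin m × (Fin k₀ ⊕ {c // c ∈ Chat})),
        S.card ≤ m * (r + 1) ∧
        w ∈ Submodule.span ℝ ((fun j => fun p => coveringD m k₀ Chat p j) '' ↑S) := by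
  classical
  intro w hw
  -- choose a codeword for each block
  have hch : ∀ i : Fin m, ∃ c ∈ C, Set.ncard {j | w (i, j) ≠ c j} ≤ r := by
    intro i
    exact hcover (fun j => w (i, j)) (fun j => hw (i, j))
  choose c hcC hcr using hch
  -- choose the representative in Chat and the sign
  have key : ∀ i : Fin m, ∃ d ∈ Chat, ∃ ε : ℝ, ∀ j, c i j = ε * d j := by
    intro i
    rcases hexact (c i) (hcC i) with ⟨h1, _⟩ | ⟨h1, _⟩
    · exact ⟨c i, h1, 1, fun j => by ring⟩
    · exact ⟨-(c i), h1, -1, fun j => by simp⟩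
  choose d hd ε hε using key
  -- the disagreement sets
  set Tfin : Fin m → Finset (Fin k₀) :=
    fun i => Finset.univ.filter (fun j => w (i, j) ≠ c i j) with hTfin
  have hTcard : ∀ i, (Tfin i).card ≤ r := by
    intro i
    have hset : ((Tfin i : Finset (Fin k₀)) : Set (Fin k₀)) = {j | w (i, j) ≠ c i j} := by
      ext j; simp [hTfin]
    have h1 : (Tfin i).card = Set.ncard {j | w (i, j) ≠ c i j} := by
      rw [← hset, Set.ncard_coe_finset]
    rw [h1]; exact hcr i
  -- the support set
  set blk : Fin m → Finset (Fin m × (Fin k₀ ⊕ {c // c ∈ Chat})) :=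
    fun i => insert (i, Sum.inr ⟨d i, hd i⟩) ((Tfin i).image (fun j => (i, Sum.inl j)))
    with hblk
  set S : Finset (Fin m × (Fin k₀ ⊕ {c // c ∈ Chat})) :=
    Finset.univ.biUnion blk with hS
  have hblkcard : ∀ i, (blk i).card ≤ r + 1 := by
    intro i
    rw [hblk]
    refine le_trans (Finset.card_insert_le _ _) ?_
    exact Nat.add_le_add_right (le_trans Finset.card_image_le (hTcard i)) 1
  refine ⟨S, ?_, ?_⟩
  · refine le_trans Finset.card_biUnion_le ?_
    calc ∑ i : Fin m, (blk i).card ≤ ∑ _i : Fin m, (r + 1) :=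
          Finset.sum_le_sum (fun i _ => hblkcard i)
    _ = m * (r + 1) := by simp [Finset.sum_const, Nat.mul_comm]
  · -- span membership
    have hcol : w = ∑ i : Fin m,
        (ε i • (fun p => coveringD m k₀ Chat p (i, Sum.inr ⟨d i, hd i⟩)) +
          ∑ j ∈ Tfin i, (w (i, j) - c i j) •
            (fun p => coveringD m k₀ Chat p (i, Sum.inl j))) := by
      funext p
      obtain ⟨a, b⟩ := p
      have hsum : ∀ i : Fin m,
          (ε i • (fun p => coveringD m k₀ Chat p (i, Sum.inr ⟨d i, hd i⟩)) +
            ∑ j ∈ Tfin i, (w (i, j) - c i j) •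
              (fun p => coveringD m k₀ Chat p (i, Sum.inl j))) (a, b)
          = if a = i then w (a, b) else 0 := by
        intro i
        by_cases hai : a = i
        · subst hai
          simp only [Pi.add_apply, Pi.smul_apply, smul_eq_mul, coveringD,
            Finset.sum_apply, if_pos rfl, if_true, eq_self_iff_true, true_and]
          by_cases hb : b ∈ Tfin a
          · have : (∑ j ∈ Tfin a, (w (a, j) - c a j) *
                (if b = j then (1:ℝ) else 0)) = w (a, b) - c a b := by
              rw [Finset.sum_eq_single b]
              · simp
              · intro j _ hj
                simp [Ne.symm hj]
              · intro h; exact absurd hb h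
            rw [this, ← hε a b]
            ring
          · have hwb : w (a, b) = c a b := by
              by_contra h
              exact hb (by simp [hTfin, h])
            have : (∑ j ∈ Tfin a, (w (a, j) - c a j) *
                (if b = j then (1:ℝ) else 0)) = 0 := by
              apply Finset.sum_eq_zero
              intro j hj
              have hbj : b ≠ j := fun h => hb (h ▸ hj)
              simp [hbj]
            rw [this, ← hε a b, hwb]
            ring
        · simp only [Pi.add_apply, Pi.smul_apply, smul_eq_mul, coveringD,
            Finset.sum_apply, if_neg hai]
          have h0 : (∑ x ∈ Tfin i, (w (i, x) - c i x) *
              (if a = i ∧ b = x then (1:ℝ) else 0)) = 0 :=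
            Finset.sum_eq_zero fun j _ => by simp [hai]
          rw [h0]; ring
      rw [Finset.sum_apply]
      rw [Finset.sum_congr rfl (fun i _ => hsum i)]
      simp
    rw [hcol]
    apply Submodule.sum_mem
    intro i _
    apply Submodule.add_mem
    · apply Submodule.smul_mem
      apply Submodule.subset_span
      exact ⟨(i, Sum.inr ⟨d i, hd i⟩),
        by
          simp only [hS, Finset.coe_biUnion, Set.mem_iUnion, Finset.mem_coe]
          exact ⟨i, Finset.mem_univ i, by rw [hblk]; exact Finset.mem_insert_self _ _⟩, rfl⟩
    · apply Submodule.sum_mem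
      intro j hj
      apply Submodule.smul_mem
      apply Submodule.subset_span
      exact ⟨(i, Sum.inl j),
        by
          simp only [hS, Finset.coe_biUnion, Set.mem_iUnion, Finset.mem_coe]
          exact ⟨i, Finset.mem_univ i, by
            rw [hblk]
            exact Finset.mem_insert_of_mem (Finset.mem_image_of_mem _ hj)⟩, rfl⟩
end
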